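/- arXiv:1910.12356 — 3 statements merged into one kernel-verified Lean document; each statement's English description precedes it below -/
import Mathlib

section
/- For k = 2 there is an exact sequence 0 → 𝒮_2(Γ) → M_2(Γ) →(∂) B_2(Γ) →(θ) R → 0, where θ is the linear map sending λ{α} to λ; i.e., ∂ has kernel 𝒮_2(Γ), the image of ∂ equals the kernel of θ, and θ is surjective. -/
open scoped MatrixGroups LinearAlgebra.Projectivization Classical
open Matrix MvPolynomial NumberField

set_option maxHeartbeats 1000000
set_option synthInstance.maxHeartbeats 200000

noncomputable section

namespace Bianchi

/-- `K` is (isomorphic to) the imaginary quadratic field `ℚ(√-d)` for some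
`d ∈ {1,2,3,7,11}`, i.e. a Euclidean imaginary quadratic field. -/
def IsEuclideanImagQuad (K : Type) [Field K] [NumberField K] : Prop :=
  ∃ d : ℕ, d ∈ ({1, 2, 3, 7, 11} : Set ℕ) ∧
    ∃ α : K, α ^ 2 = -(d : K) ∧ Algebra.adjoin ℚ {α} = ⊤

variable (K : Type) [Field K] [NumberField K]

/-- 2×2 matrices with entries in `A`. -/
abbrev Mat2 (A : Type*) := Matrix (Fin 2) (Fin 2) A

/-- The map on matrices induced by the inclusion `𝓞 K → K`. -/
def ιm : Mat2 (𝓞 K) → Mat2 K := fun M => M.map (algebraMap (𝓞 K) K)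

/-- The projective line `P¹(K)`, whose points are the cusps. -/
abbrev P1 := ℙ K (Fin 2 → K)

/-- Action of a nonsingular `K`-matrix on `P¹(K)` (acting on column vectors);
junk value (the identity) for singular matrices. -/
def mAct (A : Mat2 K) : P1 K → P1 K :=
  if h : Function.Injective (Matrix.toLin' A) then
    Projectivization.map (Matrix.toLin' A) h else id

/-- The cusp `0 = 0/1 = [0 : 1]`. -/
def c0 : P1 K := Projectivization.mk K ![0, 1]
  (by intro h; have := congrFun h 1; simp at this)

/-- The cusp `∞ = 1/0 = [1 : 0]`. -/
def cInf : P1 K := Projectivization.mk K ![1, 0]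
  (by intro h; have := congrFun h 0; simp at this)

variable (R : Type) [CommRing R] [Algebra (𝓞 K) R] (k : ℕ)

/-- `R_{k-2}[X,Y]`, the space of homogeneous polynomials of degree `k - 2` in two
variables `X, Y` over `R`, presented by the coefficient vectors with respect to the
monomial basis `X^i Y^(k-2-i)`, `0 ≤ i ≤ k-2`. -/
abbrev Poly := Fin (k - 1) → R

/-- The exponent function of the `i`-th basis monomial `X^i Y^(k-2-i)` of `R_{k-2}[X,Y]`. -/
def expo (i : Fin (k - 1)) : Fin 2 →₀ ℕ :=
  Finsupp.single 0 (i : ℕ) + Finsupp.single 1 (k - 2 - (i : ℕ))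

/-- Interpret a coefficient vector as the homogeneous polynomial
`∑ i, P i • X^i Y^(k-2-i)`. -/
def toPoly : Poly R k →ₗ[R] MvPolynomial (Fin 2) R :=
  ∑ i : Fin (k - 1), (monomial (expo k i)).comp (LinearMap.proj i)

/-- Extract the coefficient vector of a homogeneous polynomial of degree `k-2`. -/
def ofPoly : MvPolynomial (Fin 2) R →ₗ[R] Poly R k :=
  LinearMap.pi (fun i => lcoeff R (expo k i))

/-- The pair of degree-one forms `(dX - bY, -cX + aY)` attached to `g = (a b; c d)`. -/
def substVec (g : Mat2 (𝓞 K)) : Fin 2 → MvPolynomial (Fin 2) R :=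
  ![C (algebraMap (𝓞 K) R (g 1 1)) * X 0 - C (algebraMap (𝓞 K) R (g 0 1)) * X 1,
    -(C (algebraMap (𝓞 K) R (g 1 0)) * X 0) + C (algebraMap (𝓞 K) R (g 0 0)) * X 1]

/-- The substitution `P(X,Y) ↦ P(dX - bY, -cX + aY)` for `g = (a b; c d)`. -/
def substMat (g : Mat2 (𝓞 K)) : MvPolynomial (Fin 2) R →ₐ[R] MvPolynomial (Fin 2) R :=
  aeval (substVec K R g)

/-- The right action `P ↦ P|_g = P(dX - bY, -cX + aY)` of a matrix `g` over `𝓞 K`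
on `R_{k-2}[X,Y]` (substitution preserves homogeneity, so this is computed by
passing to polynomials, substituting, and taking coefficients again). -/
def polyAct (g : Mat2 (𝓞 K)) : Poly R k →ₗ[R] Poly R k :=
  (ofPoly R k) ∘ₗ (substMat K R g).toLinearMap ∘ₗ (toPoly R k)

/-- Evaluation `P(x₀, x₁)` of `P ∈ R_{k-2}[X,Y]` at a pair of elements of `R`. -/
def pevalR (P : Poly R k) (x : Fin 2 → R) : R := MvPolynomial.eval x (toPoly R k P)

end Bianchi
namespace Bianchi

variable (K : Type) [Field K] [NumberField K]
variable (R : Type) [CommRing R] [Algebra (𝓞 K) R] (k : ℕ)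
variable (Γ : Subgroup (SL(2, 𝓞 K)))

/-- The relations defining boundary modular symbols: `x|_γ = x` for `γ ∈ Γ`. -/
def bsRel : Submodule R (P1 K →₀ Poly R k) :=
  Submodule.span R {x | ∃ (γ : SL(2, 𝓞 K)) (_ : γ ∈ Γ) (α : P1 K) (P : Poly R k),
    x = Finsupp.single (mAct K (ιm K γ.1) α) (polyAct K R k γ.1 P) - Finsupp.single α P}

/-- The boundary modular symbols `B_k(Γ)` of weight `k` and level `Γ`. -/
abbrev BS := (P1 K →₀ Poly R k) ⧸ bsRel K R k Γ

/-- The boundary modular symbol `P ⊗ {α}`. -/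
def bsym (α : P1 K) (P : Poly R k) : BS K R k Γ :=
  Submodule.Quotient.mk (Finsupp.single α P)

/-- The free module underlying modular symbols. -/
abbrev MSfree := (P1 K × P1 K) →₀ Poly R k

/-- The relations defining modular symbols: `{α,α} = 0`,
`{α,β} + {β,γ} + {γ,α} = 0`, and `x|_γ = x` for `γ ∈ Γ`. -/
def msRel : Submodule R (MSfree K R k) :=
  Submodule.span R
    ({x | ∃ (α : P1 K) (P : Poly R k), x = Finsupp.single (α, α) P} ∪
     {x | ∃ (α β γ : P1 K) (P : Poly R k),
        x = Finsupp.single (α, β) P + Finsupp.single (β, γ) P + Finsupp.single (γ, α) P} ∪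
     {x | ∃ (γ : SL(2, 𝓞 K)) (_ : γ ∈ Γ) (α β : P1 K) (P : Poly R k),
        x = Finsupp.single (mAct K (ιm K γ.1) α, mAct K (ιm K γ.1) β) (polyAct K R k γ.1 P)
          - Finsupp.single (α, β) P})

/-- The modular symbols `M_k(Γ)` of weight `k` and level `Γ`. -/
abbrev MS := MSfree K R k ⧸ msRel K R k Γ

/-- The modular symbol `P ⊗ {α, β}`. -/
def msym (α β : P1 K) (P : Poly R k) : MS K R k Γ :=
  Submodule.Quotient.mk (Finsupp.single (α, β) P)

/-- The boundary map on the free modules, `P ⊗ {α,β} ↦ P ⊗ {β} - P ⊗ {α}`. -/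
def bdFree : MSfree K R k →ₗ[R] (P1 K →₀ Poly R k) :=
  Finsupp.lsum ℕ (fun p : P1 K × P1 K =>
    (Finsupp.lsingle p.2 - Finsupp.lsingle p.1 : Poly R k →ₗ[R] (P1 K →₀ Poly R k)))

lemma bdFree_rel : msRel K R k Γ ≤ (bsRel K R k Γ).comap (bdFree K R k) := by
  rw [msRel, Submodule.span_le]
  rintro x ((⟨α, P, rfl⟩ | ⟨α, β, γ, P, rfl⟩) | ⟨γ, hγ, α, β, P, rfl⟩) <;>
    simp only [SetLike.mem_coe, Submodule.mem_comap, map_add, map_sub, bdFree,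
      Finsupp.lsum_single, LinearMap.sub_apply, Finsupp.lsingle_apply]
  · simpa using (bsRel K R k Γ).zero_mem
  · have h0 : (Finsupp.single β P - Finsupp.single α P)
        + (Finsupp.single γ P - Finsupp.single β P)
        + (Finsupp.single α P - Finsupp.single γ P) = (0 : P1 K →₀ Poly R k) := by abel
    rw [h0]
    exact (bsRel K R k Γ).zero_mem
  · have h1 : (Finsupp.single (mAct K (ιm K γ.1) β) (polyAct K R k γ.1 P)
        - Finsupp.single β P) ∈ bsRel K R k Γ :=
      Submodule.subset_span ⟨γ, hγ, β, P, rfl⟩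
    have h2 : (Finsupp.single (mAct K (ιm K γ.1) α) (polyAct K R k γ.1 P)
        - Finsupp.single α P) ∈ bsRel K R k Γ :=
      Submodule.subset_span ⟨γ, hγ, α, P, rfl⟩
    have h3 := Submodule.sub_mem _ h1 h2
    convert h3 using 1
    abel

/-- The boundary map `∂ : M_k(Γ) → B_k(Γ)`. -/
def bd : MS K R k Γ →ₗ[R] BS K R k Γ :=
  Submodule.mapQ _ _ (bdFree K R k) (bdFree_rel K R k Γ)

/-- The cuspidal modular symbols `𝒮_k(Γ) = ker ∂`. -/
def Scusp : Submodule R (MS K R k Γ) := LinearMap.ker (bd K R k Γ)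

/-- The Manin symbol `[P, g] = P|_g ⊗ {g·0, g·∞}`, for an arbitrary matrix `g` over `𝓞`. -/
def maninSymM (P : Poly R k) (A : Mat2 (𝓞 K)) : MS K R k Γ :=
  msym K R k Γ (mAct K (ιm K A) (c0 K)) (mAct K (ιm K A) (cInf K)) (polyAct K R k A P)

end Bianchi
namespace Bianchi

section ThetaMap

variable (K : Type) [Field K] [NumberField K]
variable (R : Type) [CommRing R] [Algebra (𝓞 K) R]
variable (Γ : Subgroup (SL(2, 𝓞 K)))

lemma polyAct_weight_two (g : Mat2 (𝓞 K)) (P : Poly R 2) : polyAct K R 2 g P = P := by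
  funext i
  have hi : i = 0 := Fin.ext (by omega)
  subst hi
  have hexpo : expo 2 (0 : Fin (2 - 1)) = 0 := by
    simp [expo]
  simp [polyAct, ofPoly, toPoly, LinearMap.pi_apply, hexpo, Fin.sum_univ_one,
    MvPolynomial.monomial_zero', substMat, MvPolynomial.aeval_C]

/-- `θ` on the free module: `λ ⊗ {α} ↦ λ` (in weight `2` the coefficient module
`R_0[X,Y]` is `R` itself). -/
def thetaFree : (P1 K →₀ Poly R 2) →ₗ[R] R :=
  Finsupp.lsum ℕ (fun _ : P1 K => (LinearMap.proj (0 : Fin (2 - 1)) : Poly R 2 →ₗ[R] R))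

/-- The linear map `θ : B_2(Γ) → R` sending `λ{α}` to `λ`. -/
def theta : BS K R 2 Γ →ₗ[R] R :=
  Submodule.liftQ (bsRel K R 2 Γ) (thetaFree K R) (by
    rw [bsRel, Submodule.span_le]
    rintro x ⟨γ, hγ, α, P, rfl⟩
    have h1 : ∀ (β : P1 K) (Q : Poly R 2), thetaFree K R (Finsupp.single β Q) = Q 0 := by
      intro β Q; simp [thetaFree]
    simp [LinearMap.mem_ker, map_sub, h1, polyAct_weight_two])

end ThetaMap

/-! In weight two the coefficients are `R` itself, so before dividing by `Γ` the maps `∂` and `θ`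
are the last two maps of the augmented complex `ℤ[P¹ × P¹] → ℤ[P¹] → ℤ` tensored with `R`, which is
exact because coning every point to one base point splits the augmentation. Exactness survives the
quotient: the image of `∂` and the kernel of `θ` are both the images of their free counterparts. -/

section AugmentedComplex

variable (R : Type*) [Ring R] (ι M : Type*) [AddCommGroup M] [Module R M]

def pairDiff : (ι × ι →₀ M) →ₗ[R] (ι →₀ M) :=
  Finsupp.lsum ℕ fun p => Finsupp.lsingle p.2 - Finsupp.lsingle p.1

def augmentation : (ι →₀ M) →ₗ[R] M :=
  Finsupp.lsum ℕ fun _ => LinearMap.id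

variable {R ι M}

@[simp]
lemma pairDiff_single (i j : ι) (m : M) :
    pairDiff R ι M (Finsupp.single (i, j) m) = Finsupp.single j m - Finsupp.single i m := by
  simp [pairDiff]

@[simp]
lemma augmentation_single (i : ι) (m : M) : augmentation R ι M (Finsupp.single i m) = m := by
  simp [augmentation]

lemma augmentation_apply (f : ι →₀ M) : augmentation R ι M f = f.sum fun _ m => m := rfl

lemma augmentation_comp_pairDiff : augmentation R ι M ∘ₗ pairDiff R ι M = 0 := by
  ext ⟨i, j⟩ m
  simp

lemma pairDiff_cone (i₀ : ι) (f : ι →₀ M) :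
    pairDiff R ι M (f.sum fun i m => Finsupp.single (i₀, i) m)
      = f - Finsupp.single i₀ (augmentation R ι M f) := by
  rw [augmentation_apply, Finsupp.single_sum]
  simp only [map_finsuppSum, pairDiff_single, Finsupp.sum_sub, Finsupp.sum_single]

lemma range_pairDiff_eq_ker_augmentation [Nonempty ι] :
    LinearMap.range (pairDiff R ι M) = LinearMap.ker (augmentation R ι M) := by
  refine le_antisymm (LinearMap.range_le_ker_iff.mpr augmentation_comp_pairDiff) fun f hf => ?_
  obtain ⟨i₀⟩ := ‹Nonempty ι›
  refine ⟨f.sum fun i m => Finsupp.single (i₀, i) m, ?_⟩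
  rw [pairDiff_cone, LinearMap.mem_ker.mp hf, Finsupp.single_zero, sub_zero]

end AugmentedComplex

variable (K : Type) [Field K] (R : Type) [CommRing R]

instance [NumberField K] : Nonempty (P1 K) := ⟨cInf K⟩

lemma bdFree_eq_pairDiff (k : ℕ) : bdFree K R k = pairDiff R (P1 K) (Poly R k) := rfl

lemma thetaFree_eq_proj_comp_augmentation :
    thetaFree K R = LinearMap.proj 0 ∘ₗ augmentation R (P1 K) (Poly R 2) := by
  ext α P
  simp [thetaFree]

lemma range_bdFree_eq_ker_thetaFree [NumberField K] :
    LinearMap.range (bdFree K R 2) = LinearMap.ker (thetaFree K R) := by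
  have hproj : LinearMap.ker (LinearMap.proj (0 : Fin (2 - 1)) : Poly R 2 →ₗ[R] R) = ⊥ :=
    LinearMap.ker_eq_bot.mpr fun P Q h => funext fun i => by rwa [Fin.fin_one_eq_zero i]
  rw [thetaFree_eq_proj_comp_augmentation, LinearMap.ker_comp_of_ker_eq_bot _ hproj,
    bdFree_eq_pairDiff, range_pairDiff_eq_ker_augmentation]

lemma theta_bsym [NumberField K] [Algebra (𝓞 K) R] (Γ : Subgroup (SL(2, 𝓞 K))) (α : P1 K)
    (P : Poly R 2) :
    theta K R Γ (bsym K R 2 Γ α P) = P 0 := by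
  simp [theta, bsym, thetaFree]

theorem exact_sequence_weight_two_general
    (K : Type) [Field K] [NumberField K]
    (R : Type) [CommRing R] [Algebra (𝓞 K) R]
    (Γ : Subgroup (SL(2, 𝓞 K))) :
    LinearMap.ker (bd K R 2 Γ) = Scusp K R 2 Γ
    ∧ LinearMap.range (bd K R 2 Γ) = LinearMap.ker (theta K R Γ)
    ∧ Function.Surjective (theta K R Γ) := by
  refine ⟨rfl, ?_, fun r => ⟨bsym K R 2 Γ (cInf K) fun _ => r, theta_bsym K R Γ _ _⟩⟩
  rw [bd, Submodule.range_mapQ, theta, Submodule.ker_liftQ, range_bdFree_eq_ker_thetaFree]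

/-- For `k = 2` there is an exact sequence
`0 → 𝒮_2(Γ) → M_2(Γ) → B_2(Γ) → R → 0`: the boundary map `∂` has kernel `𝒮_2(Γ)`,
its image is the kernel of `θ : λ{α} ↦ λ`, and `θ` is surjective. -/
theorem exact_sequence_weight_two
    (K : Type) [Field K] [NumberField K] (hK : IsEuclideanImagQuad K)
    (R : Type) [CommRing R] [Algebra (𝓞 K) R] [Nontrivial R]
    (Γ : Subgroup (SL(2, 𝓞 K))) (hΓ : Γ.FiniteIndex) :
    LinearMap.ker (bd K R 2 Γ) = Scusp K R 2 Γ
    ∧ LinearMap.range (bd K R 2 Γ) = LinearMap.ker (theta K R Γ)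
    ∧ Function.Surjective (theta K R Γ) :=
  exact_sequence_weight_two_general K R Γ

end Bianchi
end
end

section
/- The Manin symbols [P,g], for P ∈ R_{k−2}[X,Y] and g ∈ SL₂(𝒪), generate the space of modular symbols M_k(Γ); equivalently, the natural map R_{k−2}[X,Y][Γ\SL₂(𝒪)] → M_k(Γ) sending P[Γg] to [P,g] is surjective. -/
open scoped MatrixGroups LinearAlgebra.Projectivization Classical
open Matrix MvPolynomial NumberField

set_option maxHeartbeats 1000000
set_option synthInstance.maxHeartbeats 200000

noncomputable section

/-!
Every symbol `{β, γ}` equals `{β, ∞} - {γ, ∞}`, so it suffices to treat `{g ∞, ∞}` for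
`g ∈ SL₂(𝓞)`: since `𝓞` is norm-Euclidean, `SL₂(𝓞)` acts transitively on `P¹(K)`. Manin's
continued fraction trick then runs the Euclidean algorithm on the lower left entry of `g`:
dividing `g₁₁ = t g₁₀ + r` gives `h = g T⁻ᵗ S` with lower left entry `r` and
`{g ∞, ∞} = -{(gT⁻ᵗ) 0, (gT⁻ᵗ) ∞} + {h ∞, ∞}`, the first term being a Manin symbol because
`P ↦ P|g` is bijective.
-/

namespace Bianchi

section PolynomialAction

variable {R : Type} [CommRing R] {k : ℕ}

lemma expo_apply_zero (i : Fin (k - 1)) : expo k i 0 = i := by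
  simp [expo]

lemma expo_apply_one (i : Fin (k - 1)) : expo k i 1 = k - 2 - i := by
  simp [expo]

lemma degree_expo (i : Fin (k - 1)) : (expo k i).degree = k - 2 := by
  rw [Finsupp.degree_eq_sum, Fin.sum_univ_two, expo_apply_zero, expo_apply_one]
  have := i.isLt
  omega

lemma expo_injective : Function.Injective (expo k) := fun i j h =>
  Fin.ext (by simpa [expo_apply_zero] using congrArg (· 0) h)

lemma exists_expo_eq (hk : 2 ≤ k) {e : Fin 2 →₀ ℕ} (he : e.degree = k - 2) :
    ∃ i, expo k i = e := by
  rw [Finsupp.degree_eq_sum, Fin.sum_univ_two] at he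
  refine ⟨⟨e 0, by omega⟩, Finsupp.ext fun j => ?_⟩
  fin_cases j
  · exact expo_apply_zero _
  · simp only [Fin.mk_one, expo_apply_one]
    omega

lemma toPoly_apply (P : Poly R k) : toPoly R k P = ∑ i, monomial (expo k i) (P i) := by
  simp [toPoly]

lemma ofPoly_apply (Q : MvPolynomial (Fin 2) R) (i : Fin (k - 1)) :
    ofPoly R k Q i = coeff (expo k i) Q := by
  simp [ofPoly]

lemma ofPoly_toPoly (P : Poly R k) : ofPoly R k (toPoly R k P) = P := by
  funext i
  rw [ofPoly_apply, toPoly_apply, coeff_sum, Finset.sum_eq_single i (by simp_all [coeff_monomial,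
    expo_injective.ne]) (by simp)]
  simp

lemma isHomogeneous_toPoly (P : Poly R k) : (toPoly R k P).IsHomogeneous (k - 2) := by
  rw [toPoly_apply]
  exact IsHomogeneous.sum _ _ _ fun i _ => isHomogeneous_monomial _ (degree_expo i)

lemma toPoly_ofPoly (hk : 2 ≤ k) {Q : MvPolynomial (Fin 2) R} (hQ : Q.IsHomogeneous (k - 2)) :
    toPoly R k (ofPoly R k Q) = Q := by
  ext e
  simp only [toPoly_apply, ofPoly_apply, coeff_sum, coeff_monomial]
  by_cases he : ∃ i, expo k i = e
  · obtain ⟨i, rfl⟩ := he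
    rw [Finset.sum_eq_single i (fun j _ hj => if_neg (expo_injective.ne hj)) (by simp), if_pos rfl]
  · rw [Finset.sum_eq_zero fun i _ => if_neg fun h => he ⟨i, h⟩,
      hQ.coeff_eq_zero fun hdeg => he (exists_expo_eq hk hdeg)]

variable (K : Type) [Field K] [Algebra (𝓞 K) R]

lemma isHomogeneous_substVec (g : Mat2 (𝓞 K)) (i : Fin 2) :
    (substVec K R g i).IsHomogeneous 1 := by
  fin_cases i
  · exact (isHomogeneous_C_mul_X _ _).sub (isHomogeneous_C_mul_X _ _)
  · exact (isHomogeneous_C_mul_X _ _).neg.add (isHomogeneous_C_mul_X _ _)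

lemma isHomogeneous_substMat {Q : MvPolynomial (Fin 2) R} {n : ℕ} (hQ : Q.IsHomogeneous n)
    (g : Mat2 (𝓞 K)) : (substMat K R g Q).IsHomogeneous n := by
  rw [← one_mul n]
  exact hQ.aeval _ (isHomogeneous_substVec K g)

lemma substMat_mul (g h : Mat2 (𝓞 K)) :
    substMat K R (g * h) = (substMat K R g).comp (substMat K R h) := by
  refine MvPolynomial.algHom_ext fun i => ?_
  fin_cases i <;>
    simp only [substMat, substVec, Matrix.mul_apply, Fin.sum_univ_two, AlgHom.coe_comp,
      Function.comp_apply, aeval_eq_bind₁, bind₁_X_right, algHom_C, algebraMap_eq, map_add,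
      map_sub, map_neg, map_mul, Fin.zero_eta, Fin.mk_one, cons_val_zero,
      cons_val_one, cons_val_fin_one] <;> ring

lemma substMat_one : substMat K R 1 = AlgHom.id R _ := by
  refine MvPolynomial.algHom_ext fun i => ?_
  fin_cases i <;> simp [substMat, substVec]

lemma polyAct_mul (g h : Mat2 (𝓞 K)) (P : Poly R k) :
    polyAct K R k (g * h) P = polyAct K R k g (polyAct K R k h P) := by
  rcases lt_or_ge k 2 with hk | hk
  · have : IsEmpty (Fin (k - 1)) := ⟨fun i => absurd i.isLt (by omega)⟩
    exact Subsingleton.elim _ _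
  · simp only [polyAct, LinearMap.comp_apply, AlgHom.toLinearMap_apply]
    rw [toPoly_ofPoly hk (isHomogeneous_substMat K (isHomogeneous_toPoly P) h), substMat_mul,
      AlgHom.comp_apply]

lemma polyAct_one (P : Poly R k) : polyAct K R k 1 P = P := by
  simp [polyAct, substMat_one, ofPoly_toPoly]

lemma polyAct_surjective (g : SL(2, 𝓞 K)) : Function.Surjective (polyAct K R k g.1) := fun P =>
  ⟨polyAct K R k (g⁻¹).1 P, by
    rw [← polyAct_mul, ← Matrix.SpecialLinearGroup.coe_mul, mul_inv_cancel,
      Matrix.SpecialLinearGroup.coe_one, polyAct_one]⟩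

end PolynomialAction

section ProjectiveLine

variable {K : Type} [Field K]

lemma toLin'_injective_of_det_ne_zero {A : Mat2 K} (hA : A.det ≠ 0) :
    Function.Injective (toLin' A) :=
  Matrix.mulVec_injective_iff_isUnit.2 ((A.isUnit_iff_isUnit_det).2 hA.isUnit)

lemma mAct_mk {A : Mat2 K} (hA : A.det ≠ 0) {v : Fin 2 → K} (hv : v ≠ 0) :
    mAct K A (Projectivization.mk K v hv) =
      Projectivization.mk K (A *ᵥ v)
        (by simpa using (toLin'_injective_of_det_ne_zero hA).ne hv) := by
  rw [mAct, dif_pos (toLin'_injective_of_det_ne_zero hA)]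
  rfl

lemma mAct_mul {A B : Mat2 K} (hA : A.det ≠ 0) (hB : B.det ≠ 0) (β : P1 K) :
    mAct K (A * B) β = mAct K A (mAct K B β) := by
  induction β using Projectivization.ind with
  | h v hv =>
    rw [mAct_mk hB, mAct_mk hA, mAct_mk (by rw [det_mul]; exact mul_ne_zero hA hB)]
    simp only [mulVec_mulVec]

lemma det_ιm (g : SL(2, 𝓞 K)) : (ιm K g.1).det = 1 := by
  rw [ιm, ← RingHom.mapMatrix_apply, ← RingHom.map_det, g.det_coe, map_one]

lemma mAct_ιm_mul (g h : SL(2, 𝓞 K)) (β : P1 K) :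
    mAct K (ιm K (g * h).1) β = mAct K (ιm K g.1) (mAct K (ιm K h.1) β) := by
  have hdet (g : SL(2, 𝓞 K)) : (ιm K g.1).det ≠ 0 := by rw [det_ιm]; exact one_ne_zero
  rw [← mAct_mul (hdet g) (hdet h)]
  exact congrArg (mAct K · β) (Matrix.map_mul ..)

variable [NumberField K]

lemma mAct_ιm_cInf_eq_mk (g : SL(2, 𝓞 K)) {v : Fin 2 → K} (hv : v ≠ 0) (c : K)
    (hc : ∀ i, v i = c * algebraMap (𝓞 K) K (g i 0)) :
    mAct K (ιm K g.1) (cInf K) = Projectivization.mk K v hv := by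
  rw [cInf, mAct_mk (by rw [det_ιm]; exact one_ne_zero), eq_comm, Projectivization.mk_eq_mk_iff']
  refine ⟨c, funext fun i => ?_⟩
  fin_cases i <;> simp [hc, ιm]

lemma mAct_ιm_cInf_eq_cInf (g : SL(2, 𝓞 K)) (hg : g 1 0 = 0) :
    mAct K (ιm K g.1) (cInf K) = cInf K := by
  have hdet := g.det_coe
  rw [det_fin_two, hg, mul_zero, sub_zero] at hdet
  refine mAct_ιm_cInf_eq_mk g _ (algebraMap (𝓞 K) K (g 1 1)) fun i => ?_
  fin_cases i
  · simp [← map_mul, mul_comm (g 1 1), hdet]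
  · simp [hg]

lemma mAct_ιm_cInf_eq_c0 (g : SL(2, 𝓞 K)) (h0 : g 0 0 = 0) (h1 : g 1 0 = 1) :
    mAct K (ιm K g.1) (cInf K) = c0 K :=
  mAct_ιm_cInf_eq_mk g _ 1 fun i => by fin_cases i <;> simp [h0, h1]

end ProjectiveLine

section EuclideanFunction

variable {A : Type*} [CommRing A]

def IsEuclideanFunction (f : A → ℕ) : Prop :=
  ∀ a b : A, b ≠ 0 → ∃ q r, a = q * b + r ∧ f r < f b

lemma IsEuclideanFunction.exists_eq_mul_col {f : A → ℕ} (hf : IsEuclideanFunction f) (p q : A) :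
    ∃ (c : A) (g : SL(2, A)), p = c * g 0 0 ∧ q = c * g 1 0 := by
  induction hn : f q using Nat.strong_induction_on generalizing p q with
  | _ n ih =>
  by_cases hq : q = 0
  · exact ⟨p, 1, by simp, by simp [hq]⟩
  obtain ⟨t, r, rfl, hr⟩ := hf p q hq
  obtain ⟨c, g, hq', hr'⟩ := ih (f r) (hn ▸ hr) q r rfl
  have hg := g.det_coe
  rw [det_fin_two] at hg
  refine ⟨c, ⟨!![t * g 0 0 + g 1 0, -(t * g 0 1 + g 1 1); g 0 0, -g 0 1], ?_⟩, ?_, ?_⟩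
  · rw [det_fin_two_of]
    linear_combination hg
  · simp only [hq', hr', of_apply, cons_val', cons_val_zero, cons_val_fin_one]
    ring
  · simpa using hq'

end EuclideanFunction

section NormEuclidean

variable {K : Type} [Field K] [NumberField K]

lemma isEuclideanFunction_natAbs_norm
    (h : ∀ x : K, ∃ y : 𝓞 K, |Algebra.norm ℚ (x - algebraMap (𝓞 K) K y)| < 1) :
    IsEuclideanFunction fun z : 𝓞 K => (Algebra.norm ℤ z).natAbs := by
  intro a b hb
  have hbK : algebraMap (𝓞 K) K b ≠ 0 := by simpa using hb
  obtain ⟨y, hy⟩ := h (algebraMap (𝓞 K) K a / algebraMap (𝓞 K) K b)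
  refine ⟨y, a - y * b, by ring, ?_⟩
  have hfac : algebraMap (𝓞 K) K (a - y * b) = algebraMap (𝓞 K) K b *
      (algebraMap (𝓞 K) K a / algebraMap (𝓞 K) K b - algebraMap (𝓞 K) K y) := by
    rw [map_sub, map_mul]
    field_simp
  have hlt : |(Algebra.norm ℤ (a - y * b) : ℚ)| < |(Algebra.norm ℤ b : ℚ)| := by
    rw [Algebra.coe_norm_int, Algebra.coe_norm_int, RingOfIntegers.coe_eq_algebraMap,
      RingOfIntegers.coe_eq_algebraMap, hfac, map_mul, abs_mul]
    exact mul_lt_of_lt_one_right (abs_pos.2 (Algebra.norm_ne_zero_iff.2 hbK)) hy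
  zify
  exact_mod_cast hlt

end NormEuclidean

section ImaginaryQuadratic

variable {K : Type} [Field K] [CharZero K] {α : K} {d : ℕ}

lemma linearIndependent_one_alpha (hd : 0 < d) (hα : α ^ 2 = -(d : K)) :
    LinearIndependent ℚ ![1, α] := by
  rw [LinearIndependent.pair_iff]
  intro s t hst
  simp only [Rat.smul_def, mul_one] at hst
  have ht : t = 0 := by
    by_contra ht
    have hαs : α = ((-s / t : ℚ) : K) := by
      push_cast
      field_simp
      linear_combination hst
    have hcast : (((-s / t) ^ 2 + d : ℚ) : K) = 0 := by
      rw [Rat.cast_add, Rat.cast_pow, ← hαs, hα]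
      simp
    have : (0 : ℚ) < (-s / t) ^ 2 + d := by positivity
    exact this.ne' (by exact_mod_cast hcast)
  subst ht
  simpa using hst

lemma exists_eq_add_mul_alpha (hα : α ^ 2 = -(d : K)) (htop : Algebra.adjoin ℚ {α} = ⊤) (x : K) :
    ∃ a b : ℚ, x = a + b * α := by
  have hx : x ∈ Algebra.adjoin ℚ {α} := htop ▸ Algebra.mem_top
  induction hx using Algebra.adjoin_induction with
  | mem y hy => exact ⟨0, 1, by simp [Set.mem_singleton_iff.1 hy]⟩
  | algebraMap r => exact ⟨r, 0, by simp⟩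
  | add y z _ _ hy hz =>
    obtain ⟨a, b, rfl⟩ := hy
    obtain ⟨a', b', rfl⟩ := hz
    exact ⟨a + a', b + b', by push_cast; ring⟩
  | mul y z _ _ hy hz =>
    obtain ⟨a, b, rfl⟩ := hy
    obtain ⟨a', b', rfl⟩ := hz
    exact ⟨a * a' - d * b * b', a * b' + b * a', by push_cast; linear_combination b * b' * hα⟩

lemma norm_add_mul_alpha (hd : 0 < d) (hα : α ^ 2 = -(d : K))
    (htop : Algebra.adjoin ℚ {α} = ⊤) (a b : ℚ) :
    Algebra.norm ℚ ((a : K) + b * α) = a ^ 2 + d * b ^ 2 := by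
  let B := Module.Basis.mk (linearIndependent_one_alpha hd hα) fun x _ => by
    obtain ⟨s, t, rfl⟩ := exists_eq_add_mul_alpha hα htop x
    rw [Matrix.range_cons_cons_empty, Submodule.mem_span_pair]
    exact ⟨s, t, by simp [Rat.smul_def]⟩
  have hB (s t : ℚ) : B.repr ((s : K) + t * α) 0 = s ∧ B.repr ((s : K) + t * α) 1 = t := by
    have : (s : K) + t * α = s • B 0 + t • B 1 := by simp [B, Rat.smul_def]
    simp [this]
  have h0 : ((a : K) + b * α) * B 0 = a + b * α := by simp [B]
  have h1 : ((a : K) + b * α) * B 1 = ((-d * b : ℚ) : K) + (a : ℚ) * α := by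
    simp only [B, Module.Basis.mk_apply, Matrix.cons_val_one]
    push_cast
    linear_combination b * hα
  rw [Algebra.norm_eq_matrix_det B, det_fin_two]
  simp only [Algebra.leftMulMatrix_eq_repr_mul, h0, h1, hB]
  ring

lemma sq_sub_round_le (a : ℚ) : (a - round a) ^ 2 ≤ 1 / 4 := by
  rw [← sq_abs]
  nlinarith [abs_sub_round a, abs_nonneg (a - round a)]

lemma exists_abs_norm_sub_lt_one_of_le_two (hd : 0 < d) (hd2 : d ≤ 2) (hα : α ^ 2 = -(d : K))
    (htop : Algebra.adjoin ℚ {α} = ⊤) (x : K) :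
    ∃ y : 𝓞 K, |Algebra.norm ℚ (x - algebraMap (𝓞 K) K y)| < 1 := by
  obtain ⟨a, b, rfl⟩ := exists_eq_add_mul_alpha hα htop x
  have hαint : IsIntegral ℤ α := IsIntegral.of_pow two_pos
    (by rw [hα]; simpa using isIntegral_algebraMap (R := ℤ) (A := K) (x := -(d : ℤ)))
  obtain ⟨ω, hω⟩ : ∃ ω : 𝓞 K, algebraMap (𝓞 K) K ω = α := ⟨⟨α, hαint⟩, rfl⟩
  refine ⟨round a + round b * ω, ?_⟩
  have hxy : (a : K) + b * α - algebraMap (𝓞 K) K (round a + round b * ω) =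
      ((a - round a : ℚ) : K) + ((b - round b : ℚ) : K) * α := by
    rw [map_add, map_mul, map_intCast, map_intCast, hω]
    push_cast
    ring
  have hdq : (d : ℚ) ≤ 2 := by exact_mod_cast hd2
  rw [hxy, norm_add_mul_alpha hd hα htop, abs_of_nonneg (by positivity)]
  nlinarith [sq_sub_round_le a, sq_sub_round_le b, sq_nonneg (b - round b)]

lemma exists_abs_norm_sub_lt_one_of_four_mul_eq {c : ℕ} (hc : 4 * c = 1 + d) (hd : d ≤ 11)
    (hα : α ^ 2 = -(d : K)) (htop : Algebra.adjoin ℚ {α} = ⊤) (x : K) :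
    ∃ y : 𝓞 K, |Algebra.norm ℚ (x - algebraMap (𝓞 K) K y)| < 1 := by
  obtain ⟨a, b, rfl⟩ := exists_eq_add_mul_alpha hα htop x
  have hωint : IsIntegral ℤ ((1 + α) / 2) := by
    refine ⟨Polynomial.X ^ 2 - Polynomial.X + Polynomial.C (c : ℤ), by monicity!, ?_⟩
    have hcK : 4 * (c : K) = 1 + d := by exact_mod_cast hc
    simp only [algebraMap_int_eq, map_natCast, Polynomial.eval₂_add, Polynomial.eval₂_sub,
      Polynomial.eval₂_X_pow, Polynomial.eval₂_X, Polynomial.eval₂_natCast]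
    linear_combination (hα + hcK) / 4
  obtain ⟨ω, hω⟩ : ∃ ω : 𝓞 K, algebraMap (𝓞 K) K ω = (1 + α) / 2 := ⟨⟨_, hωint⟩, rfl⟩
  set n := round (2 * b)
  set m := round (a - n / 2)
  refine ⟨m + n * ω, ?_⟩
  have hxy : (a : K) + b * α - algebraMap (𝓞 K) K (m + n * ω) =
      ((a - n / 2 - m : ℚ) : K) + ((2 * b - n : ℚ) / 2 : ℚ) * α := by
    rw [map_add, map_mul, map_intCast, map_intCast, hω]
    push_cast
    ring
  have hdq : (d : ℚ) ≤ 11 := by exact_mod_cast hd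
  rw [hxy, norm_add_mul_alpha (by omega) hα htop, abs_of_nonneg (by positivity)]
  nlinarith [sq_sub_round_le (a - n / 2), sq_sub_round_le (2 * b), sq_nonneg (2 * b - n)]

lemma exists_abs_norm_sub_lt_one [NumberField K] (hK : IsEuclideanImagQuad K) (x : K) :
    ∃ y : 𝓞 K, |Algebra.norm ℚ (x - algebraMap (𝓞 K) K y)| < 1 := by
  obtain ⟨d, hd, α, hα, htop⟩ := hK
  simp only [Set.mem_insert_iff, Set.mem_singleton_iff] at hd
  rcases hd with rfl | rfl | rfl | rfl | rfl
  · exact exists_abs_norm_sub_lt_one_of_le_two one_pos one_le_two hα htop x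
  · exact exists_abs_norm_sub_lt_one_of_le_two two_pos le_rfl hα htop x
  · exact exists_abs_norm_sub_lt_one_of_four_mul_eq (c := 1) rfl (by norm_num) hα htop x
  · exact exists_abs_norm_sub_lt_one_of_four_mul_eq (c := 2) rfl (by norm_num) hα htop x
  · exact exists_abs_norm_sub_lt_one_of_four_mul_eq (c := 3) rfl le_rfl hα htop x

end ImaginaryQuadratic

section ModularSymbols

variable (K : Type) [Field K] {R : Type} [CommRing R] [Algebra (𝓞 K) R] {k : ℕ}
  (Γ : Subgroup (SL(2, 𝓞 K)))

lemma msym_self (α : P1 K) (P : Poly R k) : msym K R k Γ α α P = 0 := by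
  rw [msym, Submodule.Quotient.mk_eq_zero]
  exact Submodule.subset_span (.inl (.inl ⟨α, P, rfl⟩))

lemma msym_add_msym_add_msym (α β γ : P1 K) (P : Poly R k) :
    msym K R k Γ α β P + msym K R k Γ β γ P + msym K R k Γ γ α P = 0 := by
  rw [msym, msym, msym, ← Submodule.Quotient.mk_add, ← Submodule.Quotient.mk_add,
    Submodule.Quotient.mk_eq_zero]
  exact Submodule.subset_span (.inl (.inr ⟨α, β, γ, P, rfl⟩))

lemma msym_swap (α β : P1 K) (P : Poly R k) :
    msym K R k Γ β α P = -msym K R k Γ α β P := by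
  have h := msym_add_msym_add_msym K Γ α β α P
  rw [msym_self, add_zero] at h
  exact eq_neg_of_add_eq_zero_right h

lemma msym_add_msym (α β γ : P1 K) (P : Poly R k) :
    msym K R k Γ α β P + msym K R k Γ β γ P = msym K R k Γ α γ P := by
  rw [← sub_eq_zero, sub_eq_add_neg, ← msym_swap, msym_add_msym_add_msym]

variable [NumberField K] (R k)

def maninSpan : Submodule R (MS K R k Γ) :=
  Submodule.span R {x | ∃ (P : Poly R k) (g : SL(2, 𝓞 K)), x = maninSymM K R k Γ P g.1}

variable {K R k Γ}

lemma msym_mAct_c0_mAct_cInf_mem_maninSpan (g : SL(2, 𝓞 K)) (Q : Poly R k) :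
    msym K R k Γ (mAct K (ιm K g.1) (c0 K)) (mAct K (ιm K g.1) (cInf K)) Q ∈
      maninSpan K R k Γ := by
  obtain ⟨P, rfl⟩ := polyAct_surjective K g Q
  exact Submodule.subset_span ⟨P, g, rfl⟩

lemma msym_mAct_cInf_mem_maninSpan {f : 𝓞 K → ℕ} (hf : IsEuclideanFunction f)
    (g : SL(2, 𝓞 K)) (P : Poly R k) :
    msym K R k Γ (mAct K (ιm K g.1) (cInf K)) (cInf K) P ∈ maninSpan K R k Γ := by
  induction hn : f (g 1 0) using Nat.strong_induction_on generalizing g with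
  | _ n ih =>
  by_cases hq : g 1 0 = 0
  · rw [mAct_ιm_cInf_eq_cInf g hq, msym_self]
    exact zero_mem _
  obtain ⟨t, r, ht, hr⟩ := hf (g 1 1) (g 1 0) hq
  let T : SL(2, 𝓞 K) := ⟨!![1, -t; 0, 1], by simp⟩
  let S : SL(2, 𝓞 K) := ⟨!![0, -1; 1, 0], by simp⟩
  have hT : mAct K (ιm K (g * T).1) (cInf K) = mAct K (ιm K g.1) (cInf K) := by
    rw [mAct_ιm_mul, mAct_ιm_cInf_eq_cInf T rfl]
  have hS : mAct K (ιm K (g * T * S).1) (cInf K) = mAct K (ιm K (g * T).1) (c0 K) := by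
    rw [mAct_ιm_mul, mAct_ιm_cInf_eq_c0 S rfl rfl]
  have hgTS : (g * T * S) 1 0 = r := by
    rw [Matrix.SpecialLinearGroup.coe_mul, Matrix.SpecialLinearGroup.coe_mul]
    simp only [T, S, Matrix.mul_apply, Fin.sum_univ_two, of_apply, cons_val', cons_val_zero,
      cons_val_one, cons_val_fin_one, mul_one, mul_zero, add_zero, mul_neg, zero_add]
    linear_combination ht
  rw [← msym_add_msym K Γ _ (mAct K (ιm K (g * T * S).1) (cInf K)), msym_swap]
  refine add_mem (neg_mem ?_) (ih _ (hn ▸ hgTS ▸ hr) _ rfl)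
  rw [hS, ← hT]
  exact msym_mAct_c0_mAct_cInf_mem_maninSpan _ _

lemma exists_mAct_cInf_eq {f : 𝓞 K → ℕ} (hf : IsEuclideanFunction f) (β : P1 K) :
    ∃ g : SL(2, 𝓞 K), mAct K (ιm K g.1) (cInf K) = β := by
  induction β using Projectivization.ind with
  | h v hv =>
  obtain ⟨⟨b, hb⟩, hbv⟩ :=
    IsLocalization.exist_integer_multiples_of_finite (nonZeroDivisors (𝓞 K)) v
  choose w hw using hbv
  obtain ⟨c, g, hp, hq⟩ := hf.exists_eq_mul_col (w 0) (w 1)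
  refine ⟨g, mAct_ιm_cInf_eq_mk g hv ((algebraMap (𝓞 K) K b)⁻¹ * algebraMap (𝓞 K) K c) ?_⟩
  have hb0 : algebraMap (𝓞 K) K b ≠ 0 := by simpa using nonZeroDivisors.ne_zero hb
  intro i
  have hwi : w i = c * g i 0 := by fin_cases i; exacts [hp, hq]
  have hvi := hw i
  rw [hwi, Algebra.smul_def, map_mul] at hvi
  field_simp
  linear_combination -hvi

lemma msym_mem_maninSpan {f : 𝓞 K → ℕ} (hf : IsEuclideanFunction f) (β γ : P1 K)
    (P : Poly R k) : msym K R k Γ β γ P ∈ maninSpan K R k Γ := by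
  obtain ⟨g, rfl⟩ := exists_mAct_cInf_eq hf β
  obtain ⟨h, rfl⟩ := exists_mAct_cInf_eq hf γ
  rw [← msym_add_msym K Γ _ (cInf K), msym_swap K Γ _ (cInf K)]
  exact add_mem (msym_mAct_cInf_mem_maninSpan hf g P)
    (neg_mem (msym_mAct_cInf_mem_maninSpan hf h P))

lemma maninSpan_eq_top {f : 𝓞 K → ℕ} (hf : IsEuclideanFunction f) : maninSpan K R k Γ = ⊤ := by
  refine Submodule.eq_top_iff'.2 fun x => ?_
  obtain ⟨x, rfl⟩ := Submodule.Quotient.mk_surjective _ x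
  induction x using Finsupp.induction_linear with
  | zero => exact zero_mem _
  | add x y hx hy =>
    rw [Submodule.Quotient.mk_add]
    exact add_mem hx hy
  | single βγ P => exact msym_mem_maninSpan hf βγ.1 βγ.2 P

end ModularSymbols

theorem manin_symbols_generate_general
    (K : Type) [Field K] [NumberField K] (hK : IsEuclideanImagQuad K)
    (R : Type) [CommRing R] [Algebra (𝓞 K) R]
    (k : ℕ)
    (Γ : Subgroup (SL(2, 𝓞 K))) :
    Submodule.span R
      {x : MS K R k Γ | ∃ (P : Poly R k) (g : SL(2, 𝓞 K)), x = maninSymM K R k Γ P g.1} = ⊤ :=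
  maninSpan_eq_top (isEuclideanFunction_natAbs_norm (exists_abs_norm_sub_lt_one hK))

/-- The Manin symbols `[P,g]`, `P ∈ R_{k-2}[X,Y]`, `g ∈ SL₂(𝓞)`,
generate the space of modular symbols `M_k(Γ)`; equivalently the natural map
`R_{k-2}[X,Y][Γ\SL₂(𝓞)] → M_k(Γ)`, `P[Γg] ↦ [P,g]`, is surjective. -/
theorem manin_symbols_generate
    (K : Type) [Field K] [NumberField K] (hK : IsEuclideanImagQuad K)
    (R : Type) [CommRing R] [Algebra (𝓞 K) R]
    (k : ℕ) (hk : 2 ≤ k)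
    (Γ : Subgroup (SL(2, 𝓞 K))) (hΓ : Γ.FiniteIndex)
    (hodd : Odd k → ∀ γ : SL(2, 𝓞 K), γ ∈ Γ → γ.1 ≠ -1) :
    Submodule.span R
      {x : MS K R k Γ | ∃ (P : Poly R k) (g : SL(2, 𝓞 K)), x = maninSymM K R k Γ P g.1} = ⊤ :=
  manin_symbols_generate_general K hK R k Γ

end Bianchi
end
end

section
/- Let 𝔫 be an ideal of 𝒪 and η ∈ 𝒪 nonzero and coprime to 𝔫. Then the set Δ̃_η·SL₂(𝒪) equals the set of matrices (a b; c d) ∈ Mat₂(𝒪) of determinant η such that c(𝒪/𝔫) + d(𝒪/𝔫) = 𝒪/𝔫, i.e., such that the bottom row reduced mod 𝔫 lies in E_𝔫. -/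
open scoped MatrixGroups LinearAlgebra.Projectivization Classical
open Matrix MvPolynomial NumberField

set_option maxHeartbeats 1000000
set_option synthInstance.maxHeartbeats 200000

noncomputable section

namespace Bianchi

variable (K : Type) [Field K] [NumberField K]

/-- The congruence subgroup `Γ₁(𝔫) = {(a b; c d) ∈ SL₂(𝓞) : c ≡ d - 1 ≡ 0 mod 𝔫}`. -/
def Gamma1 (n : Ideal (𝓞 K)) : Subgroup (SL(2, 𝓞 K)) where
  carrier := {g | g.1 1 0 ∈ n ∧ g.1 1 1 - 1 ∈ n}
  one_mem' := by
    constructor <;> simp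
  mul_mem' := by
    rintro a b ⟨hc, hd⟩ ⟨hc', hd'⟩
    have hab : (a * b).1 = a.1 * b.1 := rfl
    have h10 : (a * b).1 1 0 = a.1 1 0 * b.1 0 0 + a.1 1 1 * b.1 1 0 := by
      rw [hab, Matrix.mul_apply, Fin.sum_univ_two]
    have h11 : (a * b).1 1 1 = a.1 1 0 * b.1 0 1 + a.1 1 1 * b.1 1 1 := by
      rw [hab, Matrix.mul_apply, Fin.sum_univ_two]
    constructor
    · rw [h10]
      exact Ideal.add_mem n (Ideal.mul_mem_right _ n hc) (Ideal.mul_mem_left _ _ hc')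
    · rw [h11]
      have : a.1 1 0 * b.1 0 1 + a.1 1 1 * b.1 1 1 - 1
          = a.1 1 0 * b.1 0 1 + ((a.1 1 1 - 1) * b.1 1 1 + (b.1 1 1 - 1)) := by ring
      rw [this]
      exact Ideal.add_mem n (Ideal.mul_mem_right _ n hc)
        (Ideal.add_mem n (Ideal.mul_mem_right _ n hd) hd')
  inv_mem' := by
    rintro a ⟨hc, hd⟩
    have hinv : (a⁻¹).1 = (a.1).adjugate := Matrix.SpecialLinearGroup.coe_inv a
    have hadj : (a.1).adjugate = !![a.1 1 1, -a.1 0 1; -a.1 1 0, a.1 0 0] :=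
      Matrix.adjugate_fin_two a.1
    have hdet : a.1 0 0 * a.1 1 1 - a.1 0 1 * a.1 1 0 = 1 := by
      have := a.2
      rwa [Matrix.det_fin_two] at this
    constructor
    · show (a⁻¹).1 1 0 ∈ n
      rw [hinv, hadj]
      simpa using neg_mem hc
    · show (a⁻¹).1 1 1 - 1 ∈ n
      rw [hinv, hadj]
      have h00 : (!![a.1 1 1, -a.1 0 1; -a.1 1 0, a.1 0 0] : Mat2 (𝓞 K)) 1 1 = a.1 0 0 := by
        simp
      rw [h00]
      have hdd : a.1 0 0 * a.1 1 1 - 1 = a.1 0 1 * a.1 1 0 := by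
        linear_combination hdet
      have h3 : a.1 0 0 - 1 = -(a.1 0 0 * (a.1 1 1 - 1)) + (a.1 0 0 * a.1 1 1 - 1) := by
        ring
      rw [h3, hdd]
      exact add_mem (neg_mem (Ideal.mul_mem_left _ _ hd)) (Ideal.mul_mem_left _ _ hc)

/-- The set `Δ_η = {(a b; c d) ∈ Mat₂(𝓞) : ad - bc = η, c ≡ a - 1 ≡ 0 mod 𝔫}`. -/
def DeltaEta (n : Ideal (𝓞 K)) (η : 𝓞 K) : Set (Mat2 (𝓞 K)) :=
  {m | m.det = η ∧ m 1 0 ∈ n ∧ m 0 0 - 1 ∈ n}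

/-- The bottom row `(c, d)` of a matrix, reduced mod `𝔫`; for `g ∈ SL₂(𝓞)` this is
`π(g) = (0,1)g ∈ E_𝔫`. -/
def botPair (n : Ideal (𝓞 K)) (m : Mat2 (𝓞 K)) : (𝓞 K ⧸ n) × (𝓞 K ⧸ n) :=
  (Ideal.Quotient.mk n (m 1 0), Ideal.Quotient.mk n (m 1 1))

end Bianchi
namespace Bianchi

variable (K : Type) [Field K] [NumberField K]

/-- The Shimura involution image `Δ̃ = {g ∈ GL₂(K) : g̃ ∈ Δ}`, where
`g̃ = (d -b; -c a) = det(g)·g⁻¹` is the adjugate. -/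
def DeltaTilde (Δ : Set (Mat2 (𝓞 K))) : Set (Mat2 K) :=
  {B | B.det ≠ 0 ∧ ∃ m ∈ Δ, ιm K m = B.adjugate}

/-- The set `Δ̃·SL₂(𝓞)` of matrices over `K`. -/
def DeltaTildeSL (Δ : Set (Mat2 (𝓞 K))) : Set (Mat2 K) :=
  {A | ∃ B ∈ DeltaTilde K Δ, ∃ s : SL(2, 𝓞 K), A = B * ιm K s.1}

end Bianchi
namespace Bianchi

private lemma span_pair_quot_top {R : Type*} [CommRing R] (n : Ideal R) (c d : R)
    (h : Ideal.span {Ideal.Quotient.mk n c, Ideal.Quotient.mk n d} = ⊤) :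
    Ideal.span {c} ⊔ Ideal.span {d} ⊔ n = ⊤ := by
  rw [Ideal.eq_top_iff_one] at h ⊢
  rw [Ideal.mem_span_pair] at h
  obtain ⟨u, v, huv⟩ := h
  obtain ⟨u₀, rfl⟩ := Ideal.Quotient.mk_surjective u
  obtain ⟨v₀, rfl⟩ := Ideal.Quotient.mk_surjective v
  have hmem : 1 - (u₀ * c + v₀ * d) ∈ n := by
    rw [← Ideal.Quotient.eq_zero_iff_mem]
    simp only [map_sub, map_add, _root_.map_mul, _root_.map_one]
    rw [huv, sub_self]
  have h1 : (1:R) = u₀ * c + (v₀ * d + (1 - (u₀ * c + v₀ * d))) := by ring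
  rw [h1]
  exact add_mem
    (Submodule.mem_sup_left (Submodule.mem_sup_left (Ideal.mem_span_singleton'.mpr ⟨u₀, rfl⟩)))
    (add_mem
      (Submodule.mem_sup_left (Submodule.mem_sup_right (Ideal.mem_span_singleton'.mpr ⟨v₀, rfl⟩)))
      (Submodule.mem_sup_right hmem))

private lemma span_quot_pair_of_det {R : Type*} [CommRing R] (n : Ideal R) (η : R)
    (hcop : Ideal.span {η} ⊔ n = ⊤) (M : Matrix (Fin 2) (Fin 2) R) (hdet : M.det = η) :
    Ideal.span {Ideal.Quotient.mk n (M 1 0), Ideal.Quotient.mk n (M 1 1)} = ⊤ := by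
  have hη : (-(M 0 1)) * M 1 0 + M 0 0 * M 1 1 = η := by
    rw [← hdet, Matrix.det_fin_two]; ring
  have h1 : (1:R) ∈ Ideal.span {η} ⊔ n := hcop ▸ Submodule.mem_top
  obtain ⟨x, hx, y, hy, hxy⟩ := Submodule.mem_sup.mp h1
  obtain ⟨a, rfl⟩ := Ideal.mem_span_singleton'.mp hx
  rw [Ideal.eq_top_iff_one, Ideal.mem_span_pair]
  refine ⟨Ideal.Quotient.mk n (a * -(M 0 1)), Ideal.Quotient.mk n (a * M 0 0), ?_⟩
  have key : a * -(M 0 1) * M 1 0 + a * M 0 0 * M 1 1 = 1 - y := by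
    linear_combination a * hη + hxy
  rw [← _root_.map_mul, ← _root_.map_mul, ← _root_.map_add, key, map_sub, _root_.map_one,
    Ideal.Quotient.eq_zero_iff_mem.mpr hy, sub_zero]


private lemma adjust_d {R : Type*} [CommRing R] [IsDedekindDomain R]
    (n : Ideal R) (c d : R) (hc : c ≠ 0)
    (h : Ideal.span {c} ⊔ Ideal.span {d} ⊔ n = ⊤) :
    ∃ d' : R, d' - d ∈ n ∧ Ideal.span {c} ⊔ Ideal.span {d'} = ⊤ := by
  classical
  have hcspan : Ideal.span ({c} : Set R) ≠ 0 := by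
    simpa [Ideal.zero_eq_bot, Ideal.span_singleton_eq_bot] using hc
  set T : Set (Ideal R) := {p | p.IsPrime ∧ Ideal.span {c} ≤ p ∧ ¬ n ≤ p} with hTdef
  have hmem_bot : ∀ p ∈ T, p ≠ ⊥ := by
    rintro p ⟨hp, hle, -⟩ rfl
    exact hcspan (by simpa [Ideal.zero_eq_bot] using le_bot_iff.mp hle)
  have hTfin : T.Finite := by
    have hfin : {v : IsDedekindDomain.HeightOneSpectrum R |
        v.asIdeal ∣ Ideal.span {c}}.Finite := Ideal.finite_factors hcspan
    refine Set.Finite.subset (hfin.image (fun v => v.asIdeal)) ?_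
    rintro p hp
    exact ⟨⟨p, hp.1, hmem_bot p hp⟩, Ideal.dvd_iff_le.mpr hp.2.1, rfl⟩
  haveI : Finite T := hTfin.to_subtype
  haveI := Fintype.ofFinite T
  have hmax : ∀ p ∈ T, p.IsMaximal := fun p hp => hp.1.isMaximal (hmem_bot p hp)
  have hncop : ∀ p : T, IsCoprime n (p : Ideal R) := by
    rintro ⟨p, hp⟩
    rw [Ideal.isCoprime_iff_sup_eq]
    refine (hmax p hp).out.2 _ (lt_of_le_of_ne le_sup_right fun e => hp.2.2 ?_)
    rw [e]; exact le_sup_left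
  have hpair : Pairwise fun i j : Option T =>
      IsCoprime (Option.elim i n (fun p => (p : Ideal R)))
        (Option.elim j n (fun p => (p : Ideal R))) := by
    rintro (_|p) (_|q) hne
    · exact absurd rfl hne
    · exact hncop q
    · exact (hncop p).symm
    · have hpq : p ≠ q := fun e => hne (by rw [e])
      exact Ideal.isCoprime_iff_sup_eq.mpr
        ((hmax p p.2).coprime_of_ne (hmax q q.2) (Subtype.coe_ne_coe.mpr hpq))
  obtain ⟨r, hr⟩ := Ideal.exists_forall_sub_mem_ideal hpair
      (fun o => Option.elim o 0 (fun _ => 1 - d))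
  have hrn : r ∈ n := by simpa using hr none
  refine ⟨d + r, by simpa using hrn, ?_⟩
  by_contra hne
  obtain ⟨p, hpm, hle⟩ := Ideal.exists_le_maximal _ hne
  have hcp : Ideal.span ({c} : Set R) ≤ p := le_sup_left.trans hle
  have hdp : d + r ∈ p := hle (Submodule.mem_sup_right (Ideal.mem_span_singleton_self _))
  by_cases hnp : n ≤ p
  · have hdmem : d ∈ p := by
      have h2 := p.sub_mem hdp (hnp hrn)
      simpa using h2
    have htop : (⊤ : Ideal R) ≤ p := by
      rw [← h]
      exact sup_le (sup_le hcp
        (Ideal.span_le.mpr (Set.singleton_subset_iff.mpr hdmem))) hnp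
    exact hpm.ne_top (top_le_iff.mp htop)
  · have hpT : p ∈ T := ⟨hpm.isPrime, hcp, hnp⟩
    have h1 : r - (1 - d) ∈ p := hr (some ⟨p, hpT⟩)
    have hone : (1 : R) ∈ p := by
      have h2 := p.sub_mem hdp h1
      have h3 : d + r - (r - (1 - d)) = 1 := by ring
      rwa [h3] at h2
    exact hpm.ne_top (Ideal.eq_top_of_isUnit_mem _ hone isUnit_one)

private lemma lift_pair {R : Type*} [CommRing R] [IsDedekindDomain R]
    (n : Ideal R) (c d : R)
    (h : Ideal.span {c} ⊔ Ideal.span {d} ⊔ n = ⊤) :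
    ∃ c' d' : R, c' - c ∈ n ∧ d' - d ∈ n ∧ Ideal.span {c'} ⊔ Ideal.span {d'} = ⊤ := by
  by_cases hn : n = ⊥
  · subst hn
    refine ⟨c, d, by simp, by simp, by simpa using h⟩
  by_cases hc : c = 0
  · obtain ⟨ν, hν, hν0⟩ := Submodule.exists_mem_ne_zero_of_ne_bot hn
    have h' : Ideal.span {ν} ⊔ Ideal.span {d} ⊔ n = ⊤ := by
      rw [eq_top_iff, ← h, hc]
      have h0 : Ideal.span ({(0:R)} : Set R) = ⊥ := Ideal.span_singleton_eq_bot.mpr rfl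
      rw [h0]
      exact sup_le_sup_right (by simp) n
    obtain ⟨d', hd', hcd⟩ := adjust_d n ν d hν0 h'
    exact ⟨ν, d', by simpa [hc] using hν, hd', hcd⟩
  · obtain ⟨d', hd', hcd⟩ := adjust_d n c d hc h
    exact ⟨c, d', by simp, hd', hcd⟩

private lemma exists_SL2_row {R : Type*} [CommRing R] (c d : R)
    (h : Ideal.span {c} ⊔ Ideal.span {d} = ⊤) :
    ∃ s : Matrix.SpecialLinearGroup (Fin 2) R, s.1 1 0 = c ∧ s.1 1 1 = d := by
  have htop : Ideal.span ({c, d} : Set R) = ⊤ := by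
    rw [Ideal.span_insert, h]
  have h1 : (1 : R) ∈ Ideal.span ({c, d} : Set R) := htop ▸ Submodule.mem_top
  obtain ⟨u, v, huv⟩ := Ideal.mem_span_pair.mp h1
  have hdet : Matrix.det !![v, -u; c, d] = 1 := by
    rw [Matrix.det_fin_two_of]; linear_combination huv
  exact ⟨⟨!![v, -u; c, d], hdet⟩, by simp, by simp⟩


/-- `Δ̃_η·SL₂(𝓞)` equals the set of (images in `Mat₂(K)` of)
matrices over `𝓞` of determinant `η` whose bottom row, reduced mod `𝔫`, generates
`𝓞/𝔫`, i.e. lies in `E_𝔫`. -/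
theorem delta_tilde_SL_description
    (K : Type) [Field K] [NumberField K] (hK : IsEuclideanImagQuad K)
    (n : Ideal (𝓞 K)) (η : 𝓞 K) (hη : η ≠ 0)
    (hcop : Ideal.span {η} ⊔ n = ⊤) :
    DeltaTildeSL K (DeltaEta K n η)
      = {A : Mat2 K | ∃ M : Mat2 (𝓞 K), ιm K M = A ∧ M.det = η ∧
          Ideal.span {(botPair K n M).1, (botPair K n M).2} = ⊤} := by
  classical
  have hinj : Function.Injective (algebraMap (𝓞 K) K) := IsFractionRing.injective (𝓞 K) K
  have hmul : ∀ P Q : Mat2 (𝓞 K), ιm K (P * Q) = ιm K P * ιm K Q := fun P Q =>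
    Matrix.map_mul
  have hadjm : ∀ P : Mat2 (𝓞 K), ιm K P.adjugate = (ιm K P).adjugate := fun P => by
    have h := (algebraMap (𝓞 K) K).map_adjugate P
    simpa [ιm, RingHom.mapMatrix_apply] using h
  have hdetm : ∀ P : Mat2 (𝓞 K), (ιm K P).det = algebraMap (𝓞 K) K P.det := fun P => by
    have h := RingHom.map_det (algebraMap (𝓞 K) K) P
    simpa [ιm, RingHom.mapMatrix_apply] using h.symm
  have hcard : Fintype.card (Fin 2) ≠ 1 := by simp
  ext A
  simp only [DeltaTildeSL, DeltaTilde, DeltaEta, Set.mem_setOf_eq, botPair]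
  constructor
  · rintro ⟨B, ⟨hBdet, m, ⟨hmdet, hm10, hm00⟩, hmB⟩, s, rfl⟩
    have hMdet : (m.adjugate * s.1).det = η := by
      rw [Matrix.det_mul, Matrix.det_adjugate, hmdet, s.2]
      simp
    refine ⟨m.adjugate * s.1, ?_, hMdet, ?_⟩
    · rw [hmul, hadjm, hmB, Matrix.adjugate_adjugate _ hcard]
      simp
    · exact span_quot_pair_of_det n η hcop _ hMdet
  · rintro ⟨M, hA, hdet, hspan⟩
    obtain ⟨c', d', hc', hd', hcd⟩ :=
      lift_pair n (M 1 0) (M 1 1) (span_pair_quot_top n _ _ hspan)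
    obtain ⟨s, hs10, hs11⟩ := exists_SL2_row c' d' hcd
    set N := M * s.1.adjugate with hN
    have hdets : s.1 0 0 * d' - s.1 0 1 * c' = 1 := by
      have h2 := s.2
      rw [Matrix.det_fin_two] at h2
      rw [← hs10, ← hs11]
      exact h2
    have hadjs : s.1.adjugate = !![s.1 1 1, -s.1 0 1; -s.1 1 0, s.1 0 0] :=
      Matrix.adjugate_fin_two _
    have hN10 : N 1 0 = M 1 0 * d' - M 1 1 * c' := by
      rw [hN, Matrix.mul_apply, Fin.sum_univ_two, hadjs, ← hs10, ← hs11]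
      simp
      ring
    have hN11 : N 1 1 = M 1 1 * s.1 0 0 - M 1 0 * s.1 0 1 := by
      rw [hN, Matrix.mul_apply, Fin.sum_univ_two, hadjs]
      simp
      ring
    have hNdet : N.det = η := by
      rw [hN, Matrix.det_mul, Matrix.det_adjugate, hdet, s.2]
      simp
    have hadjN : N.adjugate = !![N 1 1, -N 0 1; -N 1 0, N 0 0] := Matrix.adjugate_fin_two _
    have e10 : N.adjugate 1 0 = -(N 1 0) := by rw [hadjN]; simp
    have e00 : N.adjugate 0 0 = N 1 1 := by rw [hadjN]; simp
    have hNs : N * s.1 = M := by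
      rw [hN, Matrix.mul_assoc, Matrix.adjugate_mul, s.2, one_smul, Matrix.mul_one]
    refine ⟨ιm K N, ⟨?_, N.adjugate, ⟨?_, ?_, ?_⟩, hadjm N⟩, s, ?_⟩
    · rw [hdetm, hNdet]
      exact fun h0 => hη (hinj (by rw [h0, map_zero]))
    · rw [Matrix.det_adjugate, hNdet]
      simp
    · rw [e10, hN10]
      have key : -(M 1 0 * d' - M 1 1 * c')
          = M 1 1 * (c' - M 1 0) - M 1 0 * (d' - M 1 1) := by ring
      rw [key]
      exact sub_mem (Ideal.mul_mem_left _ _ hc') (Ideal.mul_mem_left _ _ hd')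
    · rw [e00, hN11]
      have key : M 1 1 * s.1 0 0 - M 1 0 * s.1 0 1 - 1
          = s.1 0 0 * (M 1 1 - d') - s.1 0 1 * (M 1 0 - c') := by
        linear_combination hdets
      rw [key]
      have hmd : M 1 1 - d' ∈ n := by simpa [neg_sub] using neg_mem hd'
      have hmc : M 1 0 - c' ∈ n := by simpa [neg_sub] using neg_mem hc'
      exact sub_mem (Ideal.mul_mem_left _ _ hmd) (Ideal.mul_mem_left _ _ hmc)
    · rw [← hmul, hNs, hA]

end Bianchi
end
end
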